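/- For every real number x ≥ 1, the sequence m ↦ C m x of truncated cube-root nested radicals converges (to some real limit) as m → ∞. -/
import Mathlib


noncomputable def C : ℕ → ℝ → ℝ
  | 0, _ => 0
  | m + 1, y => (1 + 3 * y + y ^ 2 * C m (y + 2)) ^ (1 / 3 : ℝ)

lemma C_nonneg : ∀ m : ℕ, ∀ x : ℝ, 0 ≤ x → 0 ≤ C m x := by
  intro m
  induction m with
  | zero => intro x hx; simp [C]
  | succ m ih =>
    intro x hx
    have h := ih (x + 2) (by linarith)
    have hin : 0 ≤ 1 + 3 * x + x ^ 2 * C m (x + 2) := by positivity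
    exact Real.rpow_nonneg hin _

lemma C_le : ∀ m : ℕ, ∀ x : ℝ, 0 ≤ x → C m x ≤ x + 1 := by
  intro m
  induction m with
  | zero => intro x hx; simp [C]; linarith
  | succ m ih =>
    intro x hx
    have h := ih (x + 2) (by linarith)
    have h0 := C_nonneg m (x + 2) (by linarith)
    have hin : 0 ≤ 1 + 3 * x + x ^ 2 * C m (x + 2) := by positivity
    have hle : 1 + 3 * x + x ^ 2 * C m (x + 2) ≤ (x + 1) ^ 3 := by nlinarith
    calc C (m + 1) x = (1 + 3 * x + x ^ 2 * C m (x + 2)) ^ (1 / 3 : ℝ) := rfl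
      _ ≤ ((x + 1) ^ 3) ^ (1 / 3 : ℝ) := Real.rpow_le_rpow hin hle (by norm_num)
      _ = (x + 1) ^ ((3 : ℝ) * (1 / 3)) := by
          rw [← Real.rpow_natCast (x + 1) 3, ← Real.rpow_mul (by linarith)]
          norm_num
      _ = x + 1 := by norm_num

lemma C_mono : ∀ m : ℕ, ∀ x : ℝ, 0 ≤ x → C m x ≤ C (m + 1) x := by
  intro m
  induction m with
  | zero =>
    intro x hx
    simpa [C] using C_nonneg 1 x hx
  | succ m ih =>
    intro x hx
    have h := ih (x + 2) (by linarith)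
    have h0 := C_nonneg m (x + 2) (by linarith)
    have hin : 0 ≤ 1 + 3 * x + x ^ 2 * C m (x + 2) := by positivity
    have hle : 1 + 3 * x + x ^ 2 * C m (x + 2) ≤ 1 + 3 * x + x ^ 2 * C (m + 1) (x + 2) := by
      nlinarith
    exact Real.rpow_le_rpow hin hle (by norm_num)

theorem nested_cbrt_converges (x : ℝ) (hx : 1 ≤ x) :
    ∃ L : ℝ, Filter.Tendsto (fun m => C m x) Filter.atTop (nhds L) := by
  have hx0 : (0 : ℝ) ≤ x := by linarith
  have hmono : Monotone (fun m => C m x) :=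
    monotone_nat_of_le_succ fun m => C_mono m x hx0
  have hbdd : BddAbove (Set.range fun m => C m x) :=
    ⟨x + 1, by rintro _ ⟨m, rfl⟩; exact C_le m x hx0⟩
  exact ⟨_, tendsto_atTop_ciSup hmono hbdd⟩
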